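/- Let μ ≥ 0, m ≥ 0, and ρ(t) = t^{(μ+1)/2} K_{(μ−1)/(2(m+1))}(t^{m+1}/(m+1)), where K_η is the modified Bessel function of the second kind. Then ρ is twice differentiable on [1,∞) and solves the ODE ρ''(t) − t^{2m} ρ(t) − d/dt( (μ/t) ρ(t) ) = 0 for all t ≥ 1. -/

import Mathlib

noncomputable def besselK (η y : ℝ) : ℝ :=
  ∫ ζ in Set.Ioi (0:ℝ), Real.exp (-y * Real.cosh ζ) * Real.cosh (η * ζ)

noncomputable def phim (m t : ℝ) : ℝ := t ^ (m + 1) / (m + 1)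

noncomputable def rho (μ m t : ℝ) : ℝ :=
  t ^ ((μ + 1) / 2) * besselK ((μ - 1) / (2 * (m + 1))) (phim m t)

open Real MeasureTheory Set Filter
open scoped Topology

/-!
Write `K_η` through the moments `M_n(y) = ∫₀^∞ coshⁿ ζ · e^{-y cosh ζ} · cosh (η ζ) dζ`, so that
`K_η = M₀`. For `y > 0` the integrands are `O(e^{-ζ})`, uniformly for `y` bounded away from `0`, so
differentiation under the integral sign gives `M_n' = -M_{n+1}`; and integrating the derivative of
`e^{-y cosh ζ} (η sinh (η ζ) + y sinh ζ cosh (η ζ))`, which vanishes at `0` and at `∞`, over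
`(0, ∞)` gives Bessel's equation `y² M₂ - y M₁ - (y² + η²) M₀ = 0`.

For `ρ(t) = t^a K(t^{m+1}/(m+1))` with `a = (μ+1)/2`, the chain rule shows that
`ρ'' - t^{2m} ρ - (μ ρ / t)'` equals `(m+1)² t^{a-2}` times the Bessel expression
`y² K'' + y K' - (y² + η²) K` at `y = t^{m+1}/(m+1)`, where `η = (μ-1)/(2(m+1))`.
-/

lemma cosh_le_exp_abs (x : ℝ) : cosh x ≤ exp |x| := by
  rw [← cosh_abs, cosh_eq]
  linarith [exp_le_exp.2 (neg_le_self (abs_nonneg x))]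

lemma abs_sinh_le_cosh (x : ℝ) : |sinh x| ≤ cosh x := by
  rw [abs_sinh, ← cosh_abs]
  exact (sinh_lt_cosh _).le

lemma mul_sub_mul_cosh_le (c : ℝ) {y ζ : ℝ} (hy : 0 < y) (hζ : 0 ≤ ζ) :
    c * ζ - y * cosh ζ ≤ c ^ 2 / y := by
  have hcosh : ζ ^ 2 / 4 ≤ cosh ζ := by
    rw [cosh_eq]
    nlinarith [quadratic_le_exp_of_nonneg hζ, exp_pos (-ζ)]
  rw [le_div_iff₀ hy]
  nlinarith [sq_nonneg (y * ζ - 2 * c), mul_le_mul_of_nonneg_left hcosh (sq_nonneg y)]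

noncomputable def besselKIntegrand (η y : ℝ) (n : ℕ) (ζ : ℝ) : ℝ :=
  cosh ζ ^ n * exp (-y * cosh ζ) * cosh (η * ζ)

noncomputable def besselKMoment (η y : ℝ) (n : ℕ) : ℝ :=
  ∫ ζ in Ioi 0, besselKIntegrand η y n ζ

section Moments

variable {η y ζ : ℝ} {n : ℕ}

lemma besselK_eq_besselKMoment_zero (η y : ℝ) : besselK η y = besselKMoment η y 0 := by
  simp [besselK, besselKMoment, besselKIntegrand]

lemma besselKIntegrand_nonneg : 0 ≤ besselKIntegrand η y n ζ := by
  unfold besselKIntegrand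
  positivity

lemma continuous_besselKIntegrand : Continuous (besselKIntegrand η y n) := by
  unfold besselKIntegrand
  fun_prop

lemma besselKIntegrand_antitone {y₁ y₂ : ℝ} (h : y₁ ≤ y₂) :
    besselKIntegrand η y₂ n ζ ≤ besselKIntegrand η y₁ n ζ := by
  unfold besselKIntegrand
  gcongr

lemma besselKIntegrand_le (hy : 0 < y) (hζ : 0 ≤ ζ) :
    besselKIntegrand η y n ζ ≤ exp ((n + |η| + 1) ^ 2 / y) * exp (-ζ) := by
  have hcosh : cosh ζ ≤ exp ζ := by simpa [abs_of_nonneg hζ] using cosh_le_exp_abs ζ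
  have hcoshη : cosh (η * ζ) ≤ exp (|η| * ζ) := by
    simpa [abs_mul, abs_of_nonneg hζ] using cosh_le_exp_abs (η * ζ)
  calc besselKIntegrand η y n ζ ≤ exp ζ ^ n * exp (-y * cosh ζ) * exp (|η| * ζ) := by
        unfold besselKIntegrand
        gcongr
    _ = exp ((n + |η| + 1) * ζ - y * cosh ζ) * exp (-ζ) := by
        rw [← exp_nat_mul, ← exp_add, ← exp_add, ← exp_add]
        ring_nf
    _ ≤ exp ((n + |η| + 1) ^ 2 / y) * exp (-ζ) := by
        gcongr
        exact mul_sub_mul_cosh_le _ hy hζ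

lemma integrableOn_besselKIntegrand (hy : 0 < y) :
    IntegrableOn (besselKIntegrand η y n) (Ioi 0) := by
  have hexp := (exp_neg_integrableOn_Ioi 0 one_pos).const_mul (exp ((n + |η| + 1) ^ 2 / y))
  refine Integrable.mono' hexp continuous_besselKIntegrand.aestronglyMeasurable ?_
  filter_upwards [ae_restrict_mem measurableSet_Ioi] with ζ hζ
  rw [norm_of_nonneg besselKIntegrand_nonneg, neg_one_mul]
  exact besselKIntegrand_le hy (le_of_lt hζ)

lemma tendsto_besselKIntegrand_atTop (hy : 0 < y) :
    Tendsto (besselKIntegrand η y n) atTop (𝓝 0) := by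
  have hexp := tendsto_exp_neg_atTop_nhds_zero.const_mul (exp ((n + |η| + 1) ^ 2 / y))
  rw [mul_zero] at hexp
  refine tendsto_of_tendsto_of_tendsto_of_le_of_le' tendsto_const_nhds hexp
    (Eventually.of_forall fun _ => besselKIntegrand_nonneg) ?_
  filter_upwards [eventually_ge_atTop 0] with ζ hζ
  exact besselKIntegrand_le hy hζ

lemma hasDerivAt_besselKIntegrand (η : ℝ) (n : ℕ) (ζ y : ℝ) :
    HasDerivAt (fun y => besselKIntegrand η y n ζ) (-besselKIntegrand η y (n + 1) ζ) y := by
  have := (((hasDerivAt_neg' y).mul_const (cosh ζ)).exp.const_mul (cosh ζ ^ n)).mul_const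
    (cosh (η * ζ))
  refine this.congr_deriv ?_
  unfold besselKIntegrand
  ring

lemma hasDerivAt_besselKMoment (η : ℝ) (n : ℕ) (hy : 0 < y) :
    HasDerivAt (fun y => besselKMoment η y n) (-besselKMoment η y (n + 1)) y := by
  have hdom := hasDerivAt_integral_of_dominated_loc_of_deriv_le (μ := volume.restrict (Ioi 0))
    (F := fun y ζ => besselKIntegrand η y n ζ)
    (F' := fun y ζ => -besselKIntegrand η y (n + 1) ζ) (bound := besselKIntegrand η (y / 2) (n + 1))
    (Metric.ball_mem_nhds y (half_pos hy))
    (Eventually.of_forall fun _ => continuous_besselKIntegrand.aestronglyMeasurable)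
    (integrableOn_besselKIntegrand hy)
    continuous_besselKIntegrand.neg.aestronglyMeasurable
    (ae_of_all _ fun ζ x hx => ?_)
    (integrableOn_besselKIntegrand (half_pos hy))
    (ae_of_all _ fun ζ x _ => hasDerivAt_besselKIntegrand η n ζ x)
  · simpa only [besselKMoment, integral_neg] using hdom.2
  · rw [Metric.mem_ball, dist_eq, abs_lt] at hx
    rw [norm_neg, norm_of_nonneg besselKIntegrand_nonneg]
    exact besselKIntegrand_antitone (by linarith)

end Moments

theorem besselKMoment_bessel_eq (η : ℝ) {y : ℝ} (hy : 0 < y) :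
    y ^ 2 * besselKMoment η y 2 - y * besselKMoment η y 1 - (y ^ 2 + η ^ 2) * besselKMoment η y 0
      = 0 := by
  set g := besselKIntegrand η y
  set h : ℝ → ℝ := fun ζ => exp (-y * cosh ζ) * (η * sinh (η * ζ) + y * sinh ζ * cosh (η * ζ))
  have hderiv : ∀ ζ, HasDerivAt h (y * g 1 ζ + (y ^ 2 + η ^ 2) * g 0 ζ - y ^ 2 * g 2 ζ) ζ := by
    intro ζ
    have hηζ : HasDerivAt (fun ζ => η * ζ) η ζ := by simpa using (hasDerivAt_id ζ).const_mul η
    have := ((hasDerivAt_cosh ζ).const_mul (-y)).exp.fun_mul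
      ((hηζ.sinh.const_mul η).fun_add (((hasDerivAt_sinh ζ).const_mul y).fun_mul hηζ.cosh))
    refine this.congr_deriv ?_
    have hsinh := cosh_sq_sub_sinh_sq ζ
    simp only [g, besselKIntegrand]
    linear_combination (y ^ 2 * exp (-y * cosh ζ) * cosh (η * ζ)) * hsinh
  have hint (k : ℕ) (c : ℝ) : IntegrableOn (fun ζ => c * g k ζ) (Ioi 0) :=
    (integrableOn_besselKIntegrand hy).const_mul c
  have hbound : ∀ ζ, ‖h ζ‖ ≤ |η| * g 0 ζ + y * g 1 ζ := by
    intro ζ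
    calc ‖h ζ‖ = exp (-y * cosh ζ) * |η * sinh (η * ζ) + y * sinh ζ * cosh (η * ζ)| := by
          rw [norm_mul, norm_of_nonneg (exp_pos _).le, norm_eq_abs]
      _ ≤ exp (-y * cosh ζ) * (|η| * cosh (η * ζ) + y * cosh ζ * cosh (η * ζ)) := by
          gcongr
          refine (abs_add_le _ _).trans ?_
          rw [abs_mul, abs_mul, abs_mul, abs_of_pos hy, abs_of_pos (cosh_pos _)]
          gcongr <;> exact abs_sinh_le_cosh _
      _ = |η| * g 0 ζ + y * g 1 ζ := by
          simp only [g, besselKIntegrand]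
          ring
  have hlim : Tendsto h atTop (𝓝 0) := by
    refine squeeze_zero_norm hbound ?_
    simpa using ((tendsto_besselKIntegrand_atTop hy).const_mul |η|).add
      ((tendsto_besselKIntegrand_atTop hy).const_mul y)
  have h0 : h 0 = 0 := by simp [h]
  have hparts := integral_Ioi_of_hasDerivAt_of_tendsto' (fun ζ _ => hderiv ζ)
    (((hint 1 _).add (hint 0 _)).sub (hint 2 _)) hlim
  rw [h0, sub_zero, integral_sub ?_ (hint 2 _), integral_add (hint 1 _) (hint 0 _),
    integral_const_mul, integral_const_mul, integral_const_mul] at hparts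
  · unfold besselKMoment
    linarith
  · exact (hint 1 _).add (hint 0 _)

section Substitution

variable {K K' K'' : ℝ → ℝ} {m t : ℝ}

lemma phim_pos (hm : 0 < m + 1) (ht : 0 < t) : 0 < phim m t :=
  div_pos (rpow_pos_of_pos ht _) hm

lemma hasDerivAt_phim (hm : 0 < m + 1) (ht : 0 < t) : HasDerivAt (phim m) (t ^ m) t := by
  have := (hasDerivAt_rpow_const (p := m + 1) (Or.inl ht.ne')).div_const (m + 1)
  rwa [add_sub_cancel_right, mul_div_cancel_left₀ _ hm.ne'] at this

lemma hasDerivAt_rpow_mul_comp_phim (hK : ∀ y > 0, HasDerivAt K (K' y) y) (a : ℝ)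
    (hm : 0 < m + 1) (ht : 0 < t) :
    HasDerivAt (fun s => s ^ a * K (phim m s))
      (a * (t ^ (a - 1) * K (phim m t)) + t ^ (a + m) * K' (phim m t)) t := by
  have := (hasDerivAt_rpow_const (p := a) (Or.inl ht.ne')).fun_mul
    ((hK _ (phim_pos hm ht)).comp t (hasDerivAt_phim hm ht))
  refine this.congr_deriv ?_
  rw [rpow_add ht, Function.comp_apply]
  ring

noncomputable def besselSubst (K : ℝ → ℝ) (μ m t : ℝ) : ℝ :=
  t ^ ((μ + 1) / 2) * K (phim m t)

variable {μ : ℝ}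

lemma deriv_besselSubst_eventuallyEq (hK : ∀ y > 0, HasDerivAt K (K' y) y)
    (hm : 0 < m + 1) (ht : 0 < t) :
    deriv (besselSubst K μ m) =ᶠ[𝓝 t] fun s =>
      (μ + 1) / 2 * (s ^ ((μ + 1) / 2 - 1) * K (phim m s))
        + s ^ ((μ + 1) / 2 + m) * K' (phim m s) := by
  filter_upwards [Ioi_mem_nhds ht] with s hs
  exact (hasDerivAt_rpow_mul_comp_phim hK _ hm hs).deriv

lemma hasDerivAt_deriv_besselSubst (hK : ∀ y > 0, HasDerivAt K (K' y) y)
    (hK' : ∀ y > 0, HasDerivAt K' (K'' y) y) (hm : 0 < m + 1) (ht : 0 < t) :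
    HasDerivAt (deriv (besselSubst K μ m))
      ((μ + 1) / 2 * ((μ + 1) / 2 - 1) * (t ^ ((μ + 1) / 2 - 1 - 1) * K (phim m t))
        + (μ + 1) / 2 * (t ^ ((μ + 1) / 2 - 1 + m) * K' (phim m t))
        + ((μ + 1) / 2 + m) * (t ^ ((μ + 1) / 2 + m - 1) * K' (phim m t))
        + t ^ ((μ + 1) / 2 + m + m) * K'' (phim m t)) t := by
  have := ((hasDerivAt_rpow_mul_comp_phim hK ((μ + 1) / 2 - 1) hm ht).const_mul
    ((μ + 1) / 2)).add (hasDerivAt_rpow_mul_comp_phim hK' ((μ + 1) / 2 + m) hm ht)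
  refine (this.congr_of_eventuallyEq (deriv_besselSubst_eventuallyEq hK hm ht)).congr_deriv ?_
  ring

theorem besselSubst_ode (hK : ∀ y > 0, HasDerivAt K (K' y) y)
    (hK' : ∀ y > 0, HasDerivAt K' (K'' y) y)
    (hbessel : ∀ y > 0,
      y ^ 2 * K'' y + y * K' y - (y ^ 2 + ((μ - 1) / (2 * (m + 1))) ^ 2) * K y = 0)
    (hm : 0 < m + 1) (ht : 0 < t) :
    deriv (deriv (besselSubst K μ m)) t - t ^ (2 * m) * besselSubst K μ m t
      - deriv (fun s => μ / s * besselSubst K μ m s) t = 0 := by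
  have hquot := ((hasDerivAt_const t μ).fun_div (hasDerivAt_id' t) ht.ne').fun_mul
    (hasDerivAt_rpow_mul_comp_phim hK ((μ + 1) / 2) hm ht)
  rw [(hasDerivAt_deriv_besselSubst hK hK' hm ht).deriv]
  unfold besselSubst
  rw [hquot.deriv]
  have hy := hbessel _ (phim_pos hm ht)
  simp only [phim] at hy ⊢
  simp only [rpow_sub ht, rpow_add ht, rpow_one, two_mul] at hy ⊢
  -- the coefficient of `K` matches because `a (a - 1 - μ) + μ = -(μ - 1)² / 4 = -(m + 1)² η²`
  linear_combination (norm := skip) (t ^ ((μ + 1) / 2) / t ^ 2 * (m + 1) ^ 2) * hy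
  field_simp
  ring

end Substitution

theorem stmt8_general (μ m : ℝ) (hm : 0 ≤ m) :
    (∀ t ∈ Set.Ici (1:ℝ), DifferentiableAt ℝ (rho μ m) t ∧
      DifferentiableAt ℝ (deriv (rho μ m)) t) ∧
    ∀ t ≥ (1:ℝ),
      deriv (deriv (rho μ m)) t - t ^ (2 * m) * rho μ m t -
        deriv (fun s => (μ / s) * rho μ m s) t = 0 := by
  set η := (μ - 1) / (2 * (m + 1))
  have hm1 : 0 < m + 1 := by linarith
  have hK (y : ℝ) (hy : 0 < y) : HasDerivAt (besselK η) (-besselKMoment η y 1) y := by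
    simpa only [← besselK_eq_besselKMoment_zero] using hasDerivAt_besselKMoment η 0 hy
  have hK' (y : ℝ) (hy : 0 < y) :
      HasDerivAt (fun y => -besselKMoment η y 1) (besselKMoment η y 2) y := by
    simpa using (hasDerivAt_besselKMoment η 1 hy).fun_neg
  have hbessel (y : ℝ) (hy : 0 < y) :
      y ^ 2 * besselKMoment η y 2 + y * -besselKMoment η y 1
        - (y ^ 2 + η ^ 2) * besselK η y = 0 := by
    rw [besselK_eq_besselKMoment_zero]
    linarith [besselKMoment_bessel_eq η hy]
  refine ⟨fun t ht => ?_, fun t ht => besselSubst_ode hK hK' hbessel hm1 (by linarith)⟩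
  have ht0 : 0 < t := lt_of_lt_of_le one_pos ht
  exact ⟨(hasDerivAt_rpow_mul_comp_phim hK _ hm1 ht0).differentiableAt,
    (hasDerivAt_deriv_besselSubst hK hK' hm1 ht0).differentiableAt⟩

theorem stmt8 (μ m : ℝ) (hμ : 0 ≤ μ) (hm : 0 ≤ m) :
    (∀ t ∈ Set.Ici (1:ℝ), DifferentiableAt ℝ (rho μ m) t ∧
      DifferentiableAt ℝ (deriv (rho μ m)) t) ∧
    ∀ t ≥ (1:ℝ),
      deriv (deriv (rho μ m)) t - t ^ (2 * m) * rho μ m t -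
        deriv (fun s => (μ / s) * rho μ m s) t = 0 :=
  stmt8_general μ m hm
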